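/- arXiv:2205.04245 — 3 statements merged into one kernel-verified Lean document; each statement's English description precedes it below -/
import Mathlib

section
/- (Series for the square root of the principal root of the trinomial equation.) Let n ≥ 2 be a natural number. There exists ε > 0 such that for every x ∈ ℂ with |x| < ε, the family over k ∈ ℕ with general term a(k) = (1/(2n)) · (−1)^k · Γ(1/(2n) + (n−1)k/n) · ( Γ(1/(2n) − k/n + 1) )⁻¹ · x^k / k! is summable, and the square z = ( Σ_{k ∈ ℕ} a(k) )² of its sum satisfies zⁿ + x·z^{n−1} − 1 = 0. -/
/-!
Put `β = (n - 1) / n` and `A_k(t) = t / (t + βk) * C(t + βk, k)`. By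
`Γ(z + m) / Γ(z) = z (z + 1) ⋯ (z + m - 1)` the `k`-th term of the series is `A_k(1 / (2n)) (-x) ^ k`;
no pole of `Γ` is met because `2n (1 / (2n) - k / n + 1)` is odd.

For `‖β‖, ‖t‖ ≤ 1` the series `S(t) = ∑ A_k(t) y ^ k` converge when `‖y‖ < e⁻³`, and the Hagen–Rothe
convolution identity `∑_{i+j=k} A_i(t) A_j(s) = A_k(t + s)` makes `S(t) S(s) = S(t + s)`. Hence
`z = S(1/(2n))² = S(1/n)`, `zⁿ = S(1)` and `z^(n-1) = S(β)`, while `A_{k+1}(1) = A_k(β)` gives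
`S(1) = 1 - x S(β)`, which is the trinomial equation.
-/

open Finset Polynomial

section Choose

variable {K : Type*} [Field K] [CharZero K]

theorem Ring.choose_eq_descPochhammer_eval_div (x : K) (m : ℕ) :
    Ring.choose x m = (descPochhammer K m).eval x / m.factorial := by
  rw [Ring.choose_eq_smul, ← aeval_eq_smeval, aeval_def, eval₂_eq_eval_map, descPochhammer_map,
    smul_eq_mul, div_eq_inv_mul]

theorem Ring.choose_eq_prod_div (x : K) (m : ℕ) :
    Ring.choose x m = (∏ j ∈ range m, (x - j)) / m.factorial := by
  rw [choose_eq_descPochhammer_eval_div, descPochhammer_eval_eq_prod_range]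

theorem Ring.add_one_mul_choose_add_one (r : K) (k : ℕ) :
    (k + 1 : K) * Ring.choose r (k + 1) = r * Ring.choose (r - 1) k := by
  have h := Ring.choose_smul_choose r (Nat.le_add_left 1 k)
  simpa [Ring.choose_one_right, Nat.choose_one_right, nsmul_eq_mul] using h

end Choose

noncomputable def polyFun (K : Type*) [Field K] : Subalgebra K (K → K) := (aeval (id : K → K)).range

namespace polyFun

variable {K : Type*} [Field K]

theorem mem_iff {f : K → K} : f ∈ polyFun K ↔ ∃ p : K[X], ∀ x, f x = p.eval x := by
  simp only [polyFun, AlgHom.mem_range, funext_iff, aeval_fn_apply, id, coe_aeval_eq_eval,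
    eq_comm]

theorem id_mem : (id : K → K) ∈ polyFun K := ⟨X, aeval_X _⟩

theorem const_mem (c : K) : (fun _ => c) ∈ polyFun K := mem_iff.2 ⟨C c, fun _ => (eval_C).symm⟩

theorem comp_mem {f g : K → K} (hf : f ∈ polyFun K) (hg : g ∈ polyFun K) :
    f ∘ g ∈ polyFun K := by
  obtain ⟨p, hp⟩ := mem_iff.1 hf
  obtain ⟨q, hq⟩ := mem_iff.1 hg
  exact mem_iff.2 ⟨p.comp q, fun x => by simp [hp, hq]⟩

theorem eq_of_periodic [CharZero K] {f : K → K} (hf : f ∈ polyFun K)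
    (hper : ∀ x, f (x + 1) = f x) (x : K) : f x = f 0 := by
  obtain ⟨p, hp⟩ := mem_iff.1 hf
  have hnat (m : ℕ) : f m = f 0 := by
    induction m with
    | zero => simp
    | succ m ih => rw [Nat.cast_succ, hper, ih]
  have hconst : p = C (p.eval 0) := by
    refine eq_of_infinite_eval_eq _ _ ((Set.infinite_range_of_injective Nat.cast_injective).mono ?_)
    rintro _ ⟨m, rfl⟩
    simp [← hp, hnat]
  rw [hp, hp, hconst, eval_C, eval_C]

theorem eq_of_periodic₂ [CharZero K] {D : K → K → K} (hpoly : ∀ t, D t ∈ polyFun K)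
    (hpoly₀ : (fun t => D t 0) ∈ polyFun K) (hper : ∀ t s, D t (s + 1) = D t s)
    (hper₀ : ∀ t, D (t + 1) 0 = D t 0) (t s : K) : D t s = D 0 0 := by
  rw [eq_of_periodic (hpoly t) (hper t) s, eq_of_periodic hpoly₀ hper₀ t]

end polyFun

section Rothe

variable {K : Type*} [Field K] [CharZero K] (β : K)

noncomputable def rotheBinom (k : ℕ) (t : K) : K := Ring.choose (t + β * k) k

/-- `rotheCoeff β k t = t / (t + βk) * C(t + βk, k)`, written without the removable division. -/
noncomputable def rotheCoeff : ℕ → K → K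
  | 0, _ => 1
  | k + 1, t => t / (k + 1) * rotheBinom β k (t + β - 1)

@[simp] theorem rotheBinom_zero (t : K) : rotheBinom β 0 t = 1 := by
  simp [rotheBinom]

@[simp] theorem rotheCoeff_zero (t : K) : rotheCoeff β 0 t = 1 := rfl

@[simp] theorem rotheCoeff_succ_zero (k : ℕ) : rotheCoeff β (k + 1) 0 = 0 := by
  simp [rotheCoeff]

theorem rotheBinom_succ_add_one (k : ℕ) (t : K) :
    rotheBinom β (k + 1) (t + 1) = rotheBinom β (k + 1) t + rotheBinom β k (t + β) := by
  simp only [rotheBinom]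
  rw [show t + 1 + β * ((k + 1 : ℕ) : K) = t + β * ((k + 1 : ℕ) : K) + 1 by ring,
    Ring.choose_succ_succ, show t + β + β * (k : K) = t + β * ((k + 1 : ℕ) : K) by push_cast; ring,
    add_comm]

theorem rotheCoeff_succ_eq_sub (k : ℕ) (t : K) :
    rotheCoeff β (k + 1) t = rotheBinom β (k + 1) t - β * rotheBinom β k (t + β - 1) := by
  have h := Ring.add_one_mul_choose_add_one (t + β * ((k + 1 : ℕ) : K)) k
  rw [show t + β * ((k + 1 : ℕ) : K) - 1 = t + β - 1 + β * k by push_cast; ring] at h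
  simp only [rotheCoeff, rotheBinom]
  have hk : (k + 1 : K) ≠ 0 := Nat.cast_add_one_ne_zero k
  rw [div_mul_eq_mul_div, div_eq_iff hk]
  push_cast at h ⊢
  linear_combination -h

theorem rotheCoeff_succ_add_one (k : ℕ) (t : K) :
    rotheCoeff β (k + 1) (t + 1) = rotheCoeff β (k + 1) t + rotheCoeff β k (t + β) := by
  cases k with
  | zero => simp [rotheCoeff]
  | succ k =>
    have h := rotheBinom_succ_add_one β k (t + β - 1)
    rw [show t + β - 1 + 1 = t + 1 + β - 1 by ring, show t + β - 1 + β = t + β + β - 1 by ring] at h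
    rw [rotheCoeff_succ_eq_sub, rotheCoeff_succ_eq_sub, rotheCoeff_succ_eq_sub,
      rotheBinom_succ_add_one]
    linear_combination (-β) * h

theorem rotheCoeff_succ_one (k : ℕ) :
    rotheCoeff β (k + 1) 1 = rotheCoeff β k β := by
  cases k with
  | zero => simp [rotheCoeff]
  | succ m =>
    have h := Ring.add_one_mul_choose_add_one (β * ((m + 2 : ℕ) : K)) m
    have hm : (m + 1 : K) ≠ 0 := Nat.cast_add_one_ne_zero m
    have hm2 : (m + 1 + 1 : K) ≠ 0 := by exact_mod_cast Nat.succ_ne_zero (m + 1)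
    simp only [rotheCoeff, rotheBinom]
    rw [show (1 : K) + β - 1 + β * ((m + 1 : ℕ) : K) = β * ((m + 2 : ℕ) : K) by push_cast; ring,
      show β + β - 1 + β * (m : K) = β * ((m + 2 : ℕ) : K) - 1 by push_cast; ring]
    push_cast at h ⊢
    rw [div_mul_eq_mul_div, div_mul_eq_mul_div, div_eq_div_iff hm2 hm]
    linear_combination h

theorem rotheBinom_mem_polyFun (k : ℕ) : rotheBinom β k ∈ polyFun K :=
  polyFun.mem_iff.2 ⟨C (k.factorial : K)⁻¹ * (descPochhammer K k).comp (X + C (β * k)), fun t => by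
    simp [rotheBinom, Ring.choose_eq_descPochhammer_eval_div, div_eq_inv_mul]⟩

theorem rotheCoeff_mem_polyFun (k : ℕ) : rotheCoeff β k ∈ polyFun K := by
  cases k with
  | zero => exact polyFun.mem_iff.2 ⟨1, fun t => by simp⟩
  | succ k =>
    obtain ⟨p, hp⟩ := polyFun.mem_iff.1 (rotheBinom_mem_polyFun β k)
    exact polyFun.mem_iff.2 ⟨C (k + 1 : K)⁻¹ * X * p.comp (X + C (β - 1)), fun t => by
      simp [rotheCoeff, hp, div_eq_inv_mul, add_sub_assoc]⟩

/-- The Hagen–Rothe convolution identity. -/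
theorem sum_antidiagonal_rotheCoeff_mul_rotheBinom (k : ℕ) (t s : K) :
    ∑ p ∈ antidiagonal k, rotheCoeff β p.1 t * rotheBinom β p.2 s = rotheBinom β k (t + s) := by
  induction k generalizing t s with
  | zero => simp
  | succ k ih =>
    set D : K → K → K := fun t s =>
      ∑ p ∈ antidiagonal (k + 1), rotheCoeff β p.1 t * rotheBinom β p.2 s -
        rotheBinom β (k + 1) (t + s) with hD
    -- By Pascal's rule and the induction hypothesis, the defect `D` is 1-periodic in `s`, and in `t`
    -- at `s = 0`; being polynomial in each variable, it is constant.
    have hper (t s : K) : D t (s + 1) = D t s := by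
      simp only [hD, Nat.sum_antidiagonal_succ', rotheBinom_succ_add_one, mul_add, sum_add_distrib,
        ih t (s + β), ← add_assoc, rotheBinom_zero]
      ring
    have hper₀ (t : K) : D (t + 1) 0 = D t 0 := by
      simp only [hD, Nat.sum_antidiagonal_succ, rotheCoeff_succ_add_one, add_mul, sum_add_distrib,
        ih (t + β) 0, rotheCoeff_zero, add_zero, rotheBinom_succ_add_one]
      ring
    have hpoly (t : K) : D t ∈ polyFun K := by
      have hD_t : D t = ∑ p ∈ antidiagonal (k + 1), (fun _ => rotheCoeff β p.1 t) * rotheBinom β p.2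
          - rotheBinom β (k + 1) ∘ ((fun _ => t) + id) := by
        funext s; simp [hD, Finset.sum_apply]
      rw [hD_t]
      exact sub_mem (sum_mem fun p _ => mul_mem (polyFun.const_mem _) (rotheBinom_mem_polyFun β _))
        (polyFun.comp_mem (rotheBinom_mem_polyFun β _) (add_mem (polyFun.const_mem t) polyFun.id_mem))
    have hpoly₀ : (fun t => D t 0) ∈ polyFun K := by
      have hD_0 : (fun t => D t 0) = ∑ p ∈ antidiagonal (k + 1),
          rotheCoeff β p.1 * (fun _ => rotheBinom β p.2 0) - rotheBinom β (k + 1) := by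
        funext t; simp [hD, Finset.sum_apply]
      rw [hD_0]
      exact sub_mem (sum_mem fun p _ => mul_mem (rotheCoeff_mem_polyFun β _) (polyFun.const_mem _))
        (rotheBinom_mem_polyFun β _)
    have h00 : D 0 0 = 0 := by
      simp [hD, Nat.sum_antidiagonal_succ]
    exact sub_eq_zero.1 ((polyFun.eq_of_periodic₂ hpoly hpoly₀ hper hper₀ t s).trans h00)

theorem sum_antidiagonal_rotheCoeff_mul_rotheCoeff (k : ℕ) (t s : K) :
    ∑ p ∈ antidiagonal k, rotheCoeff β p.1 t * rotheCoeff β p.2 s = rotheCoeff β k (t + s) := by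
  cases k with
  | zero => simp
  | succ k =>
    have h1 := sum_antidiagonal_rotheCoeff_mul_rotheBinom β (k + 1) t s
    have h2 := sum_antidiagonal_rotheCoeff_mul_rotheBinom β k t (s + β - 1)
    rw [show t + (s + β - 1) = t + s + β - 1 by ring] at h2
    simp only [Nat.sum_antidiagonal_succ', rotheCoeff_zero, rotheBinom_zero, mul_one,
      rotheCoeff_succ_eq_sub, mul_sub, sum_sub_distrib, mul_left_comm _ β, ← mul_sum] at h1 ⊢
    linear_combination h1 - β * h2

end Rothe

section RotheSeries

theorem Complex.norm_choose_le (x : ℂ) (m : ℕ) :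
    ‖Ring.choose x m‖ ≤ (‖x‖ + m) ^ m / m.factorial := by
  rw [Ring.choose_eq_prod_div, norm_div, norm_prod, Complex.norm_natCast]
  gcongr
  calc ∏ j ∈ range m, ‖x - j‖ ≤ ∏ _j ∈ range m, (‖x‖ + m) := by
        refine prod_le_prod (fun _ _ => norm_nonneg _) fun j hj => ?_
        calc ‖x - j‖ ≤ ‖x‖ + ‖(j : ℂ)‖ := norm_sub_le _ _
          _ ≤ ‖x‖ + m := by
            rw [Complex.norm_natCast]; gcongr; exact (mem_range.1 hj).le
    _ = (‖x‖ + m) ^ m := by rw [prod_const, card_range]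

theorem norm_rotheCoeff_le {β t : ℂ} (hβ : ‖β‖ ≤ 1) (ht : ‖t‖ ≤ 1) (k : ℕ) :
    ‖rotheCoeff β k t‖ ≤ Real.exp 3 ^ k := by
  cases k with
  | zero => simp
  | succ m =>
    have hx : ‖t + β - 1 + β * m‖ ≤ m + 3 := by
      calc ‖t + β - 1 + β * m‖ ≤ ‖t‖ + ‖β‖ + ‖(1 : ℂ)‖ + ‖β‖ * m := by
            refine (norm_add_le _ _).trans ?_
            rw [norm_mul, Complex.norm_natCast]
            gcongr
            exact (norm_sub_le _ _).trans (by gcongr; exact norm_add_le _ _)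
        _ ≤ m + 3 := by
            rw [norm_one]; nlinarith [(Nat.cast_nonneg m : (0 : ℝ) ≤ m)]
    have hbound : (2 * m + 3 : ℝ) ^ m ≤ (3 * (m + 1 : ℕ)) ^ (m + 1) := by
      push_cast
      calc (2 * m + 3 : ℝ) ^ m ≤ (3 * (m + 1)) ^ m := by gcongr; linarith
        _ ≤ (3 * (m + 1)) ^ (m + 1) :=
            pow_le_pow_right₀ (by nlinarith [(Nat.cast_nonneg m : (0 : ℝ) ≤ m)]) m.le_succ
    calc ‖rotheCoeff β (m + 1) t‖ = ‖t‖ / (m + 1) * ‖Ring.choose (t + β - 1 + β * m) m‖ := by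
          simp only [rotheCoeff, rotheBinom, norm_mul, norm_div]
          norm_cast
      _ ≤ 1 / (m + 1) * ((m + 3 + m) ^ m / m.factorial) := by
          gcongr
          exact (Complex.norm_choose_le _ m).trans (by gcongr)
      _ = (2 * m + 3 : ℝ) ^ m / (m + 1).factorial := by
          rw [Nat.factorial_succ]; push_cast; field_simp; ring
      _ ≤ (3 * (m + 1 : ℕ) : ℝ) ^ (m + 1) / (m + 1).factorial := by gcongr
      _ ≤ Real.exp (3 * (m + 1 : ℕ)) := Real.pow_div_factorial_le_exp _ (by positivity) _
      _ = Real.exp 3 ^ (m + 1) := by rw [mul_comm, Real.exp_nat_mul]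

/-- `rotheSeries β t y = 𝓑_β(y) ^ t`, where `𝓑_β(y) = 1 + y 𝓑_β(y) ^ β` is the generalized binomial
series. -/
noncomputable def rotheSeries (β t y : ℂ) : ℂ := ∑' k, rotheCoeff β k t * y ^ k

variable {β y : ℂ}

theorem summable_norm_rotheCoeff_mul_pow {t : ℂ} (hβ : ‖β‖ ≤ 1) (ht : ‖t‖ ≤ 1)
    (hy : ‖y‖ < Real.exp (-3)) : Summable fun k => ‖rotheCoeff β k t * y ^ k‖ := by
  rw [Real.exp_neg, ← one_div] at hy
  refine Summable.of_nonneg_of_le (fun _ => norm_nonneg _) (fun k => ?_)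
    (summable_geometric_of_lt_one (by positivity) ((lt_div_iff₀' (Real.exp_pos 3)).1 hy))
  rw [norm_mul, norm_pow, mul_pow]
  gcongr
  exact norm_rotheCoeff_le hβ ht k

theorem rotheSeries_mul {t s : ℂ} (hβ : ‖β‖ ≤ 1) (ht : ‖t‖ ≤ 1) (hs : ‖s‖ ≤ 1)
    (hy : ‖y‖ < Real.exp (-3)) :
    rotheSeries β t y * rotheSeries β s y = rotheSeries β (t + s) y := by
  rw [rotheSeries, rotheSeries, tsum_mul_tsum_eq_tsum_sum_antidiagonal_of_summable_norm
    (summable_norm_rotheCoeff_mul_pow hβ ht hy) (summable_norm_rotheCoeff_mul_pow hβ hs hy)]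
  refine tsum_congr fun k => ?_
  rw [← sum_antidiagonal_rotheCoeff_mul_rotheCoeff, sum_mul]
  refine sum_congr rfl fun p hp => ?_
  rw [← mem_antidiagonal.1 hp, pow_add]
  ring

theorem rotheSeries_zero (β y : ℂ) : rotheSeries β 0 y = 1 := by
  rw [rotheSeries, tsum_eq_single 0]
  · simp
  · rintro (_ | k) hk
    · exact absurd rfl hk
    · simp

theorem rotheSeries_pow {t : ℂ} (hβ : ‖β‖ ≤ 1) (hy : ‖y‖ < Real.exp (-3)) (m : ℕ)
    (hmt : ‖(m : ℂ) * t‖ ≤ 1) : rotheSeries β t y ^ m = rotheSeries β (m * t) y := by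
  rw [norm_mul, Complex.norm_natCast] at hmt
  induction m with
  | zero => simp [rotheSeries_zero]
  | succ m ih =>
    push_cast at hmt ⊢
    have ht : ‖t‖ ≤ 1 := by nlinarith [norm_nonneg t, (Nat.cast_nonneg m : (0 : ℝ) ≤ m)]
    have hm : m * ‖t‖ ≤ 1 := by linarith [norm_nonneg t]
    rw [pow_succ, ih hm, rotheSeries_mul hβ _ ht hy, add_one_mul]
    rwa [norm_mul, Complex.norm_natCast]

theorem rotheSeries_one (hβ : ‖β‖ ≤ 1) (hy : ‖y‖ < Real.exp (-3)) :
    rotheSeries β 1 y = 1 + y * rotheSeries β β y := by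
  have hsum := (summable_norm_rotheCoeff_mul_pow hβ norm_one.le hy).of_norm
  rw [rotheSeries, hsum.tsum_eq_zero_add, rotheSeries, ← tsum_mul_left]
  simp only [rotheCoeff_zero, pow_zero, mul_one, rotheCoeff_succ_one, pow_succ]
  congr 1
  exact tsum_congr fun k => by ring

end RotheSeries

theorem norm_natCast_sub_one_div_le_one (n : ℕ) : ‖((n : ℂ) - 1) / n‖ ≤ 1 := by
  rcases n with _ | n
  · simp
  · rw [Nat.cast_succ, add_sub_cancel_right, norm_div, Complex.norm_natCast, ← Nat.cast_succ,
      Complex.norm_natCast]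
    exact div_le_one_of_le₀ (by exact_mod_cast n.le_succ) (Nat.cast_nonneg _)

section Gamma

open Complex

theorem Complex.choose_eq_Gamma_div {x : ℂ} {m : ℕ} (hx : ∀ j : ℕ, x - m + 1 ≠ -j) :
    Ring.choose x m = Gamma (x + 1) / Gamma (x - m + 1) / m.factorial := by
  rw [Ring.choose_eq_descPochhammer_eval_div, descPochhammer_eval_eq_ascPochhammer,
    ← Gamma_add_nat_div_Gamma_eq _ hx, show x - m + 1 + m = x + 1 by ring]

theorem rotheCoeff_eq_Gamma {β t : ℂ} {k : ℕ} (ht : t ≠ 0)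
    (hpole : ∀ j : ℕ, t + β * k - k + 1 ≠ -j) :
    rotheCoeff β k t = t * Gamma (t + β * k) / (Gamma (t + β * k - k + 1) * k.factorial) := by
  cases k with
  | zero =>
    have hΓ : Gamma t ≠ 0 := by
      refine Gamma_ne_zero fun j => ?_
      rcases j with _ | j
      · simpa using ht
      · exact fun h => hpole j (by rw [h]; push_cast; ring)
    simp only [rotheCoeff_zero, CharP.cast_eq_zero, mul_zero, add_zero, sub_zero,
      Gamma_add_one t ht, Nat.factorial_zero, Nat.cast_one, mul_one]
    field_simp
  | succ m =>
    have hx := hpole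
    rw [show t + β * ((m + 1 : ℕ) : ℂ) - ((m + 1 : ℕ) : ℂ) + 1 = t + β - 1 + β * m - m + 1 by
      push_cast; ring] at hx
    simp only [rotheCoeff, rotheBinom, Complex.choose_eq_Gamma_div hx, Nat.factorial_succ]
    rw [show t + β - 1 + β * m + 1 = t + β * ((m + 1 : ℕ) : ℂ) by push_cast; ring,
      show t + β - 1 + β * m - m + 1 = t + β * ((m + 1 : ℕ) : ℂ) - ((m + 1 : ℕ) : ℂ) + 1 by
      push_cast; ring]
    push_cast
    simp only [div_eq_mul_inv, mul_inv]
    ring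

theorem one_div_two_mul_sub_div_add_one_ne_neg_natCast {n : ℕ} (hn : n ≠ 0) (k j : ℕ) :
    1 / (2 * (n : ℂ)) - k / n + 1 ≠ -j := by
  intro h
  have hn' : (n : ℂ) ≠ 0 := Nat.cast_ne_zero.2 hn
  have hcast : ((1 + 2 * n + 2 * (n * j) : ℕ) : ℂ) = ((2 * k : ℕ) : ℂ) := by
    field_simp at h
    push_cast
    linear_combination h
  have hnat := Nat.cast_injective hcast
  generalize n * j = q at hnat
  omega

theorem mellin_term_eq_rotheCoeff_mul_pow {n : ℕ} (hn : n ≠ 0) (x : ℂ) (k : ℕ) :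
    1 / (2 * (n : ℂ)) * (-1 : ℂ) ^ k * Gamma (1 / (2 * (n : ℂ)) + ((n : ℂ) - 1) * k / n) *
        (Gamma (1 / (2 * (n : ℂ)) - k / n + 1))⁻¹ * x ^ k / k.factorial =
      rotheCoeff (((n : ℂ) - 1) / n) k (1 / (2 * n)) * (-x) ^ k := by
  have hn' : (n : ℂ) ≠ 0 := Nat.cast_ne_zero.2 hn
  have harg : 1 / (2 * (n : ℂ)) + (n - 1) / n * k - k + 1 = 1 / (2 * (n : ℂ)) - k / n + 1 := by
    field_simp; ring
  have hpole := one_div_two_mul_sub_div_add_one_ne_neg_natCast hn k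
  rw [← harg] at hpole
  rw [rotheCoeff_eq_Gamma (by simp [hn']) hpole, harg, div_mul_eq_mul_div ((n : ℂ) - 1), neg_pow]
  ring

end Gamma

/-- Mellin's series for the square root of the principal root of the trinomial equation
`zⁿ + x·z^{n-1} - 1 = 0`: for `|x|` small enough the series with general term
`(1/(2n))·(-1)^k·Γ(1/(2n) + (n-1)k/n)·(Γ(1/(2n) - k/n + 1))⁻¹·x^k/k!` is summable, and the
square of its sum is a root of the trinomial equation. -/
theorem mellin_series_sqrt_trinomial (n : ℕ) (hn : 2 ≤ n) :
    ∃ ε > (0 : ℝ), ∀ x : ℂ, ‖x‖ < ε →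
      let a : ℕ → ℂ := fun k =>
        (1 / (2 * (n : ℂ))) * (-1 : ℂ) ^ k *
          Complex.Gamma (1 / (2 * (n : ℂ)) + ((n : ℂ) - 1) * (k : ℂ) / (n : ℂ)) *
          (Complex.Gamma (1 / (2 * (n : ℂ)) - (k : ℂ) / (n : ℂ) + 1))⁻¹ *
          x ^ k / (Nat.factorial k : ℂ)
      Summable a ∧
        ((∑' k : ℕ, a k) ^ 2) ^ n + x * ((∑' k : ℕ, a k) ^ 2) ^ (n - 1) - 1 = 0 := by
  refine ⟨Real.exp (-3), Real.exp_pos _, fun x hx => ?_⟩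
  intro a
  have hn0 : n ≠ 0 := by omega
  set β : ℂ := ((n : ℂ) - 1) / n with hβ_def
  set u : ℂ := 1 / (2 * (n : ℂ)) with hu_def
  have hy : ‖-x‖ < Real.exp (-3) := by rwa [norm_neg]
  have hβ : ‖β‖ ≤ 1 := norm_natCast_sub_one_div_le_one n
  have hu : ‖u‖ ≤ 1 := by
    have h2n : (1 : ℝ) ≤ 2 * n := by norm_cast; omega
    simpa [hu_def] using inv_le_one_of_one_le₀ h2n
  have h2n : ((2 * n : ℕ) : ℂ) * u = 1 := by rw [hu_def]; push_cast; field_simp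
  have h2n1 : ((2 * (n - 1) : ℕ) : ℂ) * u = β := by
    rw [hu_def, hβ_def, Nat.cast_mul, Nat.cast_sub (by omega)]; field_simp; ring
  have ha : a = fun k => rotheCoeff β k u * (-x) ^ k :=
    funext (mellin_term_eq_rotheCoeff_mul_pow hn0 x)
  refine ⟨ha ▸ (summable_norm_rotheCoeff_mul_pow hβ hu hy).of_norm, ?_⟩
  rw [show ∑' k, a k = rotheSeries β u (-x) from congrArg tsum ha, ← pow_mul, ← pow_mul,
    rotheSeries_pow hβ hy _ (by rw [h2n, norm_one]), rotheSeries_pow hβ hy _ (by rwa [h2n1]), h2n,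
    h2n1, rotheSeries_one hβ hy]
  ring
end

section
/- (Integrability of Mikhalkin's integrand.) Let n ≥ 3 and p ≥ 1 be natural numbers and let n₁, …, n_p be natural numbers with 0 < n_k ≤ n − 2 for each k; write n′_k = n − n_k. Let x = (x₁, …, x_p) ∈ ℂᵖ be such that for every t ∈ [0,1], 1 + Σ_{k=1}^{p} y_k(t)·e^{−n′_kπi/n} ≠ 0 and 1 + Σ_{k=1}^{p} y_k(t)·e^{n′_kπi/n} ≠ 0, where y_k(t) = x_k · t^{n_k/n} · (1−t)^{n′_k/n} (real powers of t and 1−t). Then the complex-valued function t ↦ t^{(1−n)/n} · (1−t)^{−(1+n)/n} · [ e^{πi/n}·log(1 + Σ_{k=1}^{p} y_k(t)·e^{−n′_kπi/n}) − e^{−πi/n}·log(1 + Σ_{k=1}^{p} y_k(t)·e^{n′_kπi/n}) ] is interval integrable on [0,1] with respect to Lebesgue measure. -/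
/-!
Near `t = 0` the weight `t^((1-n)/n)` is integrable, but near `t = 1` the weight
`(1-t)^(-(1+n)/n)` is not, and the logarithms have to compensate. Since `n - n_k ≥ 2`, every
`y_k(t)` is `O((1-t)^(2/n))`; since the arguments `1 + Σ y_k e_k` are continuous and nonvanishing
on `[0,1]`, their principal logarithms are bounded there, hence also `O((1-t)^(2/n))`. The
integrand is then dominated by the Beta-type function `t^(1/n-1) (1-t)^(1/n-1)`.
-/
open MeasureTheory Set

lemma intervalIntegrable_rpow_mul_one_sub_rpow {a b : ℝ} (ha : -1 < a) (hb : -1 < b) :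
    IntervalIntegrable (fun t : ℝ => t ^ a * (1 - t) ^ b) volume 0 1 := by
  have hbeta := (Complex.betaIntegral_convergent (u := a + 1) (v := b + 1)
    (by simp; linarith) (by simp; linarith)).norm
  refine hbeta.congr_uIoo fun t ht => ?_
  rw [uIoo_of_le zero_le_one] at ht
  have h1t : 0 ≤ 1 - t := sub_nonneg.2 ht.2.le
  simp only [add_sub_cancel_right]
  rw [← Complex.ofReal_one, ← Complex.ofReal_sub, ← Complex.ofReal_cpow ht.1.le,
    ← Complex.ofReal_cpow h1t, ← Complex.ofReal_mul, Complex.norm_real,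
    Real.norm_of_nonneg (mul_nonneg (Real.rpow_nonneg ht.1.le _) (Real.rpow_nonneg h1t _))]

lemma intervalIntegrable_rpow_mul_one_sub_rpow_mul {a b c C : ℝ} {g : ℝ → ℂ} (ha : -1 < a)
    (hbc : -1 < b + c) (hg : AEStronglyMeasurable g (volume.restrict (Ioo 0 1)))
    (hgc : ∀ t ∈ Ioo (0 : ℝ) 1, ‖g t‖ ≤ C * (1 - t) ^ c) :
    IntervalIntegrable (fun t : ℝ => ((t ^ a : ℝ) : ℂ) * (((1 - t) ^ b : ℝ) : ℂ) * g t)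
      volume 0 1 := by
  rw [intervalIntegrable_iff_integrableOn_Ioo_of_le zero_le_one]
  have hdom := (intervalIntegrable_iff_integrableOn_Ioo_of_le zero_le_one).1
    ((intervalIntegrable_rpow_mul_one_sub_rpow ha hbc).const_mul C)
  refine hdom.mono' ((Measurable.aestronglyMeasurable (by fun_prop)).mul hg)
    (ae_restrict_of_forall_mem measurableSet_Ioo fun t ht => ?_)
  have h1t : 0 < 1 - t := sub_pos.2 ht.2
  calc ‖((t ^ a : ℝ) : ℂ) * (((1 - t) ^ b : ℝ) : ℂ) * g t‖
      = t ^ a * (1 - t) ^ b * ‖g t‖ := by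
        rw [norm_mul, norm_mul, Complex.norm_real, Complex.norm_real,
          Real.norm_of_nonneg (Real.rpow_nonneg ht.1.le _),
          Real.norm_of_nonneg (Real.rpow_nonneg h1t.le _)]
    _ ≤ t ^ a * (1 - t) ^ b * (C * (1 - t) ^ c) :=
        mul_le_mul_of_nonneg_left (hgc t ht)
          (mul_nonneg (Real.rpow_nonneg ht.1.le _) (Real.rpow_nonneg h1t.le _))
    _ = C * (t ^ a * (1 - t) ^ (b + c)) := by rw [Real.rpow_add h1t]; ring

lemma Real.rpow_mul_one_sub_rpow_le {t a b c : ℝ} (ht : t ∈ Icc 0 1) (ha : 0 ≤ a) (hc : 0 ≤ c)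
    (hcb : c ≤ b) : t ^ a * (1 - t) ^ b ≤ (1 - t) ^ c := by
  have h1t : 0 ≤ 1 - t := sub_nonneg.2 ht.2
  calc t ^ a * (1 - t) ^ b ≤ 1 * (1 - t) ^ c :=
        mul_le_mul (rpow_le_one ht.1 ht.2 ha)
          (rpow_le_rpow_of_exponent_ge' h1t (by linarith [ht.1]) hc hcb)
          (rpow_nonneg h1t _) zero_le_one
    _ = (1 - t) ^ c := one_mul _

lemma continuous_mul_rpow_mul_one_sub_rpow (c : ℂ) {a b : ℝ} (ha : 0 ≤ a) (hb : 0 ≤ b) :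
    Continuous fun t : ℝ => c * ((t ^ a : ℝ) : ℂ) * (((1 - t) ^ b : ℝ) : ℂ) := by
  fun_prop (disch := assumption)

lemma norm_mul_rpow_mul_one_sub_rpow_le (c : ℂ) {t a b d : ℝ} (ht : t ∈ Icc 0 1) (ha : 0 ≤ a)
    (hd : 0 ≤ d) (hdb : d ≤ b) :
    ‖c * ((t ^ a : ℝ) : ℂ) * (((1 - t) ^ b : ℝ) : ℂ)‖ ≤ ‖c‖ * (1 - t) ^ d := by
  rw [norm_mul, norm_mul, Complex.norm_real, Complex.norm_real,
    Real.norm_of_nonneg (Real.rpow_nonneg ht.1 _),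
    Real.norm_of_nonneg (Real.rpow_nonneg (sub_nonneg.2 ht.2) _), mul_assoc]
  exact mul_le_mul_of_nonneg_left (Real.rpow_mul_one_sub_rpow_le ht ha hd hdb) (norm_nonneg _)

namespace Complex

lemma norm_log_le (w : ℂ) : ‖log w‖ ≤ |Real.log ‖w‖| + Real.pi := by
  refine (norm_add_le _ _).trans (add_le_add ?_ ?_)
  · rw [norm_real, Real.norm_eq_abs]
  · rw [norm_mul, norm_I, mul_one, norm_real, Real.norm_eq_abs]
    exact abs_arg_le_pi w

lemma norm_log_one_add_le_mul_norm {z : ℂ} {L : ℝ} (hL : ‖log (1 + z)‖ ≤ L) :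
    ‖log (1 + z)‖ ≤ (3 / 2 + 2 * L) * ‖z‖ := by
  have hL0 : 0 ≤ L := (norm_nonneg _).trans hL
  rcases le_or_gt ‖z‖ (1 / 2) with hz | hz
  · calc ‖log (1 + z)‖ ≤ 3 / 2 * ‖z‖ := norm_log_one_add_half_le_self hz
      _ ≤ (3 / 2 + 2 * L) * ‖z‖ := by nlinarith [norm_nonneg z]
  · calc ‖log (1 + z)‖ ≤ L := hL
      _ ≤ (3 / 2 + 2 * L) * ‖z‖ := by nlinarith

end Complex

section LogBounds

variable {X : Type*} [TopologicalSpace X] {K : Set X}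

lemma IsCompact.exists_norm_log_le (hK : IsCompact K) {w : X → ℂ} (hw : ContinuousOn w K)
    (hw0 : ∀ x ∈ K, w x ≠ 0) : ∃ L, ∀ x ∈ K, ‖Complex.log (w x)‖ ≤ L := by
  obtain ⟨L, hL⟩ := hK.exists_bound_of_continuousOn
    (hw.norm.log fun x hx => norm_ne_zero_iff.2 (hw0 x hx))
  refine ⟨L + Real.pi, fun x hx => (Complex.norm_log_le _).trans ?_⟩
  simpa [Real.norm_eq_abs] using hL x hx

lemma IsCompact.exists_norm_log_one_add_le_mul_norm (hK : IsCompact K) {z : X → ℂ}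
    (hz : ContinuousOn z K) (hz0 : ∀ x ∈ K, 1 + z x ≠ 0) :
    ∃ C, 0 ≤ C ∧ ∀ x ∈ K, ‖Complex.log (1 + z x)‖ ≤ C * ‖z x‖ := by
  obtain ⟨L, hL⟩ := hK.exists_norm_log_le (continuousOn_const.add hz) hz0
  refine ⟨3 / 2 + 2 * max L 0, by positivity, fun x hx => ?_⟩
  exact Complex.norm_log_one_add_le_mul_norm ((hL x hx).trans (le_max_left _ _))

lemma IsCompact.exists_norm_log_one_add_sum_le {ι : Type*} [Fintype ι] (hK : IsCompact K)
    {y : ι → X → ℂ} {e : ι → ℂ} {b : ι → ℝ} {s : X → ℝ} (hy : ∀ i, ContinuousOn (y i) K)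
    (he : ∀ i, ‖e i‖ ≤ 1) (hys : ∀ i, ∀ x ∈ K, ‖y i x‖ ≤ b i * s x)
    (h0 : ∀ x ∈ K, 1 + ∑ i, y i x * e i ≠ 0) :
    ∃ C, ∀ x ∈ K, ‖Complex.log (1 + ∑ i, y i x * e i)‖ ≤ C * s x := by
  obtain ⟨C, hC0, hC⟩ := hK.exists_norm_log_one_add_le_mul_norm
    (continuousOn_finsetSum _ fun i _ => (hy i).mul continuousOn_const) h0
  refine ⟨C * ∑ i, b i, fun x hx => (hC x hx).trans ?_⟩
  calc C * ‖∑ i, y i x * e i‖ ≤ C * ∑ i, b i * s x := by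
        refine mul_le_mul_of_nonneg_left
          ((norm_sum_le _ _).trans (Finset.sum_le_sum fun i _ => ?_)) hC0
        rw [norm_mul]
        exact (mul_le_of_le_one_right (norm_nonneg _) (he i)).trans (hys i x hx)
    _ = C * (∑ i, b i) * s x := by rw [← Finset.sum_mul, mul_assoc]

end LogBounds

theorem mikhalkin_integrand_integrable_general (n p : ℕ) (hn : 3 ≤ n)
    (nk : Fin p → ℕ) (hnk : ∀ i, 0 < nk i ∧ nk i ≤ n - 2) (x : Fin p → ℂ)
    (y : Fin p → ℝ → ℂ)
    (hy : ∀ i t, y i t =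
      x i * ((t ^ ((nk i : ℝ) / (n : ℝ)) : ℝ) : ℂ) *
        (((1 - t) ^ (((n : ℝ) - (nk i : ℝ)) / (n : ℝ)) : ℝ) : ℂ))
    (hminus : ∀ t ∈ Set.Icc (0 : ℝ) 1,
      1 + ∑ i, y i t *
        Complex.exp (-(((n : ℂ) - (nk i : ℂ)) * (Real.pi : ℂ) * Complex.I / (n : ℂ))) ≠ 0)
    (hplus : ∀ t ∈ Set.Icc (0 : ℝ) 1,
      1 + ∑ i, y i t *
        Complex.exp (((n : ℂ) - (nk i : ℂ)) * (Real.pi : ℂ) * Complex.I / (n : ℂ)) ≠ 0) :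
    IntervalIntegrable (fun t : ℝ =>
      ((t ^ ((1 - (n : ℝ)) / (n : ℝ)) : ℝ) : ℂ) *
        (((1 - t) ^ (-(1 + (n : ℝ)) / (n : ℝ)) : ℝ) : ℂ) *
        (Complex.exp ((Real.pi : ℂ) * Complex.I / (n : ℂ)) *
            Complex.log (1 + ∑ i, y i t *
              Complex.exp (-(((n : ℂ) - (nk i : ℂ)) * (Real.pi : ℂ) * Complex.I / (n : ℂ)))) -
          Complex.exp (-((Real.pi : ℂ) * Complex.I / (n : ℂ))) *
            Complex.log (1 + ∑ i, y i t *
              Complex.exp (((n : ℂ) - (nk i : ℂ)) * (Real.pi : ℂ) * Complex.I / (n : ℂ)))))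
      MeasureTheory.volume 0 1 := by
  have hn0 : (0 : ℝ) < n := Nat.cast_pos.2 (by omega)
  have hdb : ∀ i, 2 / (n : ℝ) ≤ ((n : ℝ) - nk i) / n := fun i => by
    have : nk i + 2 ≤ n := by have := (hnk i).2; omega
    have : (nk i : ℝ) + 2 ≤ n := by exact_mod_cast this
    gcongr
    linarith
  have hy_cont : ∀ i, Continuous (y i) := fun i => funext (hy i) ▸
    continuous_mul_rpow_mul_one_sub_rpow (x i) (by positivity) (le_trans (by positivity) (hdb i))
  have hy_le : ∀ i, ∀ t ∈ Icc (0 : ℝ) 1, ‖y i t‖ ≤ ‖x i‖ * (1 - t) ^ (2 / n : ℝ) :=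
    fun i t ht => hy i t ▸ norm_mul_rpow_mul_one_sub_rpow_le (x i) ht (by positivity)
      (by positivity) (hdb i)
  obtain ⟨C₁, hC₁⟩ := isCompact_Icc.exists_norm_log_one_add_sum_le
    (fun i => (hy_cont i).continuousOn) (fun i => by simp [Complex.norm_exp]) hy_le hminus
  obtain ⟨C₂, hC₂⟩ := isCompact_Icc.exists_norm_log_one_add_sum_le
    (fun i => (hy_cont i).continuousOn) (fun i => by simp [Complex.norm_exp]) hy_le hplus
  refine intervalIntegrable_rpow_mul_one_sub_rpow_mul (c := 2 / n) (C := C₁ + C₂) ?_ ?_ ?_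
    fun t ht => ?_
  · rw [lt_div_iff₀ hn0]
    linarith
  · rw [← add_div, lt_div_iff₀ hn0]
    linarith
  · have hy_meas : ∀ i, Measurable (y i) := fun i => (hy_cont i).measurable
    exact Measurable.aestronglyMeasurable (by fun_prop)
  · have ht' : t ∈ Icc (0 : ℝ) 1 := Ioo_subset_Icc_self ht
    refine (norm_sub_le _ _).trans ?_
    have h₁ : ‖Complex.exp ((Real.pi : ℂ) * Complex.I / (n : ℂ))‖ = 1 := by
      simp [Complex.norm_exp]
    have h₂ : ‖Complex.exp (-((Real.pi : ℂ) * Complex.I / (n : ℂ)))‖ = 1 := by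
      simp [Complex.norm_exp]
    rw [norm_mul, norm_mul, h₁, h₂, one_mul, one_mul, add_mul]
    exact add_le_add (hC₁ t ht') (hC₂ t ht')

/-- Integrability of Mikhalkin's integrand: if `x` lies outside the exceptional sets
`Σ₋ ∪ Σ₊`, then the integrand of Mikhalkin's formula is interval integrable on `[0,1]`. -/
theorem mikhalkin_integrand_integrable (n p : ℕ) (hn : 3 ≤ n) (hp : 1 ≤ p)
    (nk : Fin p → ℕ) (hnk : ∀ i, 0 < nk i ∧ nk i ≤ n - 2) (x : Fin p → ℂ)
    (y : Fin p → ℝ → ℂ)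
    (hy : ∀ i t, y i t =
      x i * ((t ^ ((nk i : ℝ) / (n : ℝ)) : ℝ) : ℂ) *
        (((1 - t) ^ (((n : ℝ) - (nk i : ℝ)) / (n : ℝ)) : ℝ) : ℂ))
    (hminus : ∀ t ∈ Set.Icc (0 : ℝ) 1,
      1 + ∑ i, y i t *
        Complex.exp (-(((n : ℂ) - (nk i : ℂ)) * (Real.pi : ℂ) * Complex.I / (n : ℂ))) ≠ 0)
    (hplus : ∀ t ∈ Set.Icc (0 : ℝ) 1,
      1 + ∑ i, y i t *
        Complex.exp (((n : ℂ) - (nk i : ℂ)) * (Real.pi : ℂ) * Complex.I / (n : ℂ)) ≠ 0) :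
    IntervalIntegrable (fun t : ℝ =>
      ((t ^ ((1 - (n : ℝ)) / (n : ℝ)) : ℝ) : ℂ) *
        (((1 - t) ^ (-(1 + (n : ℝ)) / (n : ℝ)) : ℝ) : ℂ) *
        (Complex.exp ((Real.pi : ℂ) * Complex.I / (n : ℂ)) *
            Complex.log (1 + ∑ i, y i t *
              Complex.exp (-(((n : ℂ) - (nk i : ℂ)) * (Real.pi : ℂ) * Complex.I / (n : ℂ)))) -
          Complex.exp (-((Real.pi : ℂ) * Complex.I / (n : ℂ))) *
            Complex.log (1 + ∑ i, y i t *
              Complex.exp (((n : ℂ) - (nk i : ℂ)) * (Real.pi : ℂ) * Complex.I / (n : ℂ)))))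
      MeasureTheory.volume 0 1 :=
  mikhalkin_integrand_integrable_general n p hn nk hnk x y hy hminus hplus
end

section
/- (Holomorphy of the integral representation.) Let n ≥ 2 be a natural number, and let U ⊆ ℂ be the set of all x such that for every t ∈ [0,1], 1 + x·t^{(n−1)/n}·(1−t)^{1/n}·e^{−πi/n} ≠ 0 and 1 + x·t^{(n−1)/n}·(1−t)^{1/n}·e^{πi/n} ≠ 0. Then the function w : ℂ → ℂ defined by w(x) = 1 + (1/(4πi·n)) · ∫₀¹ t^{1/(2n)−1} · (1−t)^{−1/(2n)−1} · [ e^{πi/(2n)}·log(1 + x·t^{(n−1)/n}·(1−t)^{1/n}·e^{−πi/n}) − e^{−πi/(2n)}·log(1 + x·t^{(n−1)/n}·(1−t)^{1/n}·e^{πi/n}) ] dt is complex differentiable at every point of U (i.e. DifferentiableOn ℂ on U). -/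
/-!
Each logarithm in the integrand has the form `log (1 + x v(t))`, where `v(t) = ρ(t) c` with
`ρ(t) = t^{(n-1)/n} (1-t)^{1/n}` and `|c| = 1`. Since `ρ(0) = 0`, the intermediate value theorem
makes the set `K = v([0, 1])` star-shaped about `0`, so for `x ∈ U` the whole segment from `1` to
`1 + x u` (`u ∈ K`) avoids `0`; hence `1 + x u` stays in the slit plane, and by compactness
`|1 + y u| ≥ δ > 0` for all `y` near `x`. The mean value inequality then gives
`|log (1 + y u)| ≤ |y u| / δ` and the `y`-derivative is at most `|u| / δ`, so integrand and
derivative are dominated by a multiple of `t^{-1/(2n)} (1-t)^{1/(2n)-1}`, a Beta integrand, and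
one may differentiate under the integral sign.
-/

open MeasureTheory Set Complex

namespace Complex

lemma one_add_mem_slitPlane_of_forall_ne_zero {z : ℂ}
    (h : ∀ s ∈ Icc (0 : ℝ) 1, 1 + (s : ℂ) * z ≠ 0) : 1 + z ∈ slitPlane := by
  by_contra hz
  obtain ⟨hre, him⟩ : (1 + z).re ≤ 0 ∧ (1 + z).im = 0 := by
    simpa [mem_slitPlane_iff, not_or] using hz
  simp only [add_re, one_re, add_im, one_im, zero_add] at hre him
  -- `1 + z` is a nonpositive real, so the segment from `1` to `1 + z` crosses `0`
  have hz0 : z.re ≠ 0 := by linarith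
  refine h (-1 / z.re) ⟨div_nonneg_of_nonpos (by norm_num) (by linarith), ?_⟩ ?_
  · rw [div_le_one_of_neg (by linarith)]; linarith
  · apply Complex.ext <;> simp [him, hz0]

lemma norm_log_one_add_le_div {z : ℂ} {δ : ℝ} (hδ : 0 < δ)
    (h : ∀ s ∈ Icc (0 : ℝ) 1, δ ≤ ‖1 + (s : ℂ) * z‖) : ‖log (1 + z)‖ ≤ ‖z‖ / δ := by
  have hslit : ∀ s ∈ Icc (0 : ℝ) 1, 1 + (s : ℂ) * z ∈ slitPlane := by
    intro s hs
    refine one_add_mem_slitPlane_of_forall_ne_zero fun r hr ↦ ?_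
    have hrs : r * s ∈ Icc (0 : ℝ) 1 :=
      ⟨mul_nonneg hr.1 hs.1, mul_le_one₀ hr.2 hs.1 hs.2⟩
    rw [← norm_pos_iff, ← mul_assoc, ← ofReal_mul]
    exact hδ.trans_le (h _ hrs)
  have hderiv : ∀ s ∈ Icc (0 : ℝ) 1,
      HasDerivAt (fun s : ℝ ↦ log (1 + s * z)) (z / (1 + s * z)) s := fun s hs ↦ by
    simpa using (((hasDerivAt_id s).ofReal_comp.mul_const z).const_add 1).clog_real (hslit s hs)
  have := norm_image_sub_le_of_norm_deriv_le_segment_01' (C := ‖z‖ / δ)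
    (fun s hs ↦ (hderiv s hs).hasDerivWithinAt) fun s hs ↦ by
      rw [norm_div]
      exact div_le_div_of_nonneg_left (norm_nonneg z) hδ (h s (Ico_subset_Icc_self hs))
  simpa using this

end Complex

section LogOneAddMul

variable {K : Set ℂ} {x : ℂ}

lemma exists_ball_forall_le_norm_one_add_mul (hK : IsCompact K) (hx : ∀ u ∈ K, 1 + x * u ≠ 0) :
    ∃ ε > 0, ∃ δ > 0, ∀ y ∈ Metric.ball x ε, ∀ u ∈ K, δ ≤ ‖1 + y * u‖ := by
  have hC : IsClosed ((fun u ↦ 1 + x * u) '' K) := (hK.image (by fun_prop)).isClosed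
  obtain ⟨m, hm, hball⟩ := Metric.isOpen_iff.mp hC.isOpen_compl 0 fun ⟨u, hu, h0⟩ ↦ hx u hu h0
  have hxK : ∀ u ∈ K, m ≤ ‖1 + x * u‖ := fun u hu ↦ by
    by_contra! h
    exact hball (mem_ball_zero_iff.mpr h) ⟨u, hu, rfl⟩
  obtain ⟨R, hR, hKR⟩ := hK.isBounded.exists_pos_norm_le
  refine ⟨m / (2 * R), by positivity, m / 2, by positivity, fun y hy u hu ↦ ?_⟩
  rw [Metric.mem_ball, dist_eq_norm] at hy
  have hyu : ‖(y - x) * u‖ ≤ m / 2 := by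
    rw [norm_mul]
    calc ‖y - x‖ * ‖u‖ ≤ m / (2 * R) * R := by gcongr; exact hKR u hu
      _ = m / 2 := by field_simp
  calc m / 2 ≤ ‖1 + x * u‖ - ‖(y - x) * u‖ := by linarith [hxK u hu]
    _ ≤ ‖1 + y * u‖ := by
      rw [show 1 + y * u = 1 + x * u + (y - x) * u by ring]
      exact norm_sub_le_norm_add _ _

lemma StarConvex.one_add_mul_mem_slitPlane (hK0 : StarConvex ℝ 0 K)
    (hx : ∀ u ∈ K, 1 + x * u ≠ 0) {u : ℂ} (hu : u ∈ K) :
    1 + x * u ∈ slitPlane := by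
  refine one_add_mem_slitPlane_of_forall_ne_zero fun s hs ↦ ?_
  rw [mul_left_comm, ← real_smul]
  exact hx _ (hK0.smul_mem hu hs.1 hs.2)

lemma StarConvex.norm_log_one_add_mul_le (hK0 : StarConvex ℝ 0 K) {δ : ℝ} (hδ : 0 < δ)
    (hx : ∀ u ∈ K, δ ≤ ‖1 + x * u‖) {u : ℂ} (hu : u ∈ K) : ‖log (1 + x * u)‖ ≤ ‖x‖ * ‖u‖ / δ := by
  rw [← norm_mul]
  refine norm_log_one_add_le_div hδ fun s hs ↦ ?_
  rw [mul_left_comm, ← real_smul]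
  exact hx _ (hK0.smul_mem hu hs.1 hs.2)

variable {α : Type*} [MeasurableSpace α] {μ : Measure α} {w v : α → ℂ}

lemma aestronglyMeasurable_mul_log_one_add_mul (hw : AEStronglyMeasurable w μ)
    (hv : AEStronglyMeasurable v μ) (x : ℂ) :
    AEStronglyMeasurable (fun t ↦ w t * log (1 + x * v t)) μ :=
  hw.mul (measurable_log.comp_aemeasurable (by fun_prop)).aestronglyMeasurable

lemma integrable_mul_log_one_add_mul (hK : IsCompact K) (hK0 : StarConvex ℝ 0 K)
    (hw : AEStronglyMeasurable w μ) (hv : AEStronglyMeasurable v μ)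
    (hwv : Integrable (fun t ↦ w t * v t) μ) (hvK : ∀ᵐ t ∂μ, v t ∈ K)
    (hx : ∀ u ∈ K, 1 + x * u ≠ 0) : Integrable (fun t ↦ w t * log (1 + x * v t)) μ := by
  obtain ⟨ε, hε, δ, hδ, hbound⟩ := exists_ball_forall_le_norm_one_add_mul hK hx
  refine (hwv.norm.const_mul (‖x‖ / δ)).mono'
    (aestronglyMeasurable_mul_log_one_add_mul hw hv x) ?_
  filter_upwards [hvK] with t ht
  calc ‖w t * log (1 + x * v t)‖ ≤ ‖w t‖ * (‖x‖ * ‖v t‖ / δ) := by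
        rw [norm_mul]
        gcongr
        exact hK0.norm_log_one_add_mul_le hδ (hbound x (Metric.mem_ball_self hε)) ht
    _ = ‖x‖ / δ * ‖w t * v t‖ := by rw [norm_mul]; ring

theorem differentiableOn_integral_mul_log_one_add_mul (hK : IsCompact K)
    (hK0 : StarConvex ℝ 0 K)
    (hw : AEStronglyMeasurable w μ) (hv : AEStronglyMeasurable v μ)
    (hwv : Integrable (fun t ↦ w t * v t) μ) (hvK : ∀ᵐ t ∂μ, v t ∈ K) :
    DifferentiableOn ℂ (fun x ↦ ∫ t, w t * log (1 + x * v t) ∂μ)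
      {x | ∀ u ∈ K, 1 + x * u ≠ 0} := by
  intro x hx
  obtain ⟨ε, hε, δ, hδ, hbound⟩ := exists_ball_forall_le_norm_one_add_mul hK hx
  have hslit : ∀ y ∈ Metric.ball x ε, ∀ u ∈ K, 1 + y * u ∈ slitPlane := fun y hy _ hu ↦
    hK0.one_add_mul_mem_slitPlane (fun u hu ↦ norm_pos_iff.mp (hδ.trans_le (hbound y hy u hu))) hu
  refine (hasDerivAt_integral_of_dominated_loc_of_deriv_le
    (F' := fun y t ↦ w t * (v t / (1 + y * v t))) (bound := fun t ↦ ‖w t * v t‖ / δ)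
    (Metric.ball_mem_nhds x hε) (.of_forall (aestronglyMeasurable_mul_log_one_add_mul hw hv))
    (integrable_mul_log_one_add_mul hK hK0 hw hv hwv hvK hx)
    (hw.mul (hv.aemeasurable.div (by fun_prop)).aestronglyMeasurable) ?_
    (hwv.norm.div_const δ) ?_).2.differentiableAt.differentiableWithinAt
  · filter_upwards [hvK] with t ht y hy
    rw [norm_mul, norm_div, norm_mul, mul_div_assoc]
    gcongr
    exact hbound y hy _ ht
  · filter_upwards [hvK] with t ht y hy
    simpa using ((((hasDerivAt_id y).mul_const (v t)).const_add 1).clog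
      (hslit y hy _ ht)).const_mul (w t)

end LogOneAddMul

lemma starConvex_image_ofReal_mul {ρ : ℝ → ℝ} {a b : ℝ} (hρ : ContinuousOn ρ (Icc a b))
    (hρa : ρ a = 0) (c : ℂ) : StarConvex ℝ 0 ((fun t ↦ (ρ t : ℂ) * c) '' Icc a b) := by
  rintro _ ⟨t, ht, rfl⟩ r s hr hs hrs
  have hsρ : s * ρ t ∈ uIcc (ρ a) (ρ t) := by
    rw [hρa]
    exact ((convex_uIcc 0 (ρ t)).starConvex left_mem_uIcc).smul_mem right_mem_uIcc hs
      (by linarith)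
  have hsub : uIcc a t ⊆ Icc a b := uIcc_subset_Icc (left_mem_Icc.mpr (ht.1.trans ht.2)) ht
  obtain ⟨t', ht', hρt'⟩ := intermediate_value_uIcc (hρ.mono hsub) hsρ
  exact ⟨t', hsub ht', by simp [hρt', mul_assoc]⟩

lemma integrableOn_rpow_mul_one_sub_rpow {a b : ℝ} (ha : -1 < a) (hb : -1 < b) :
    IntegrableOn (fun t : ℝ ↦ t ^ a * (1 - t) ^ b) (Ioo 0 1) := by
  have h := betaIntegral_convergent (u := a + 1) (v := b + 1) (by simp; linarith)
    (by simp; linarith)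
  rw [intervalIntegrable_iff_integrableOn_Ioc_of_le zero_le_one] at h
  refine IntegrableOn.congr_fun (h.mono_set Ioo_subset_Ioc_self).norm (fun t ht ↦ ?_)
    measurableSet_Ioo
  have h1t : 0 < 1 - t := sub_pos.mpr ht.2
  simp only [add_sub_cancel_right, norm_mul]
  rw [← ofReal_one, ← ofReal_sub, norm_cpow_eq_rpow_re_of_pos ht.1,
    norm_cpow_eq_rpow_re_of_pos h1t, ofReal_re, ofReal_re]

lemma integrableOn_and_differentiableOn_rpow_mul_log {a b p q : ℝ} (ha : 0 < a) (hb : 0 ≤ b)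
    (hpa : -1 < p + a) (hqb : -1 < q + b) (c : ℂ) :
    let S := {x : ℂ | ∀ t ∈ Icc (0 : ℝ) 1,
      1 + x * ((t ^ a : ℝ) : ℂ) * (((1 - t) ^ b : ℝ) : ℂ) * c ≠ 0}
    let F := fun (x : ℂ) (t : ℝ) ↦ ((t ^ p : ℝ) : ℂ) * (((1 - t) ^ q : ℝ) : ℂ) *
      log (1 + x * ((t ^ a : ℝ) : ℂ) * (((1 - t) ^ b : ℝ) : ℂ) * c)
    (∀ x ∈ S, IntegrableOn (F x) (Ioo 0 1)) ∧
      DifferentiableOn ℂ (fun x ↦ ∫ t in Ioo 0 1, F x t) S := by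
  intro S F
  set K := (fun t : ℝ ↦ ((t ^ a * (1 - t) ^ b : ℝ) : ℂ) * c) '' Icc 0 1
  have hρ : Continuous fun t : ℝ ↦ t ^ a * (1 - t) ^ b :=
    (Real.continuous_rpow_const ha.le).mul ((Real.continuous_rpow_const hb).comp (by fun_prop))
  have hK : IsCompact K := isCompact_Icc.image (by fun_prop)
  have hK0 : StarConvex ℝ 0 K :=
    starConvex_image_ofReal_mul hρ.continuousOn (by simp [Real.zero_rpow ha.ne']) c
  have hvK : ∀ᵐ t ∂volume.restrict (Ioo (0 : ℝ) 1), ((t ^ a * (1 - t) ^ b : ℝ) : ℂ) * c ∈ K :=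
    ae_restrict_of_forall_mem measurableSet_Ioo fun t ht ↦
      mem_image_of_mem _ (Ioo_subset_Icc_self ht)
  have hSK : S ⊆ {x | ∀ u ∈ K, 1 + x * u ≠ 0} := by
    rintro x hx _ ⟨t, ht, rfl⟩
    simpa [mul_assoc] using hx t ht
  have hF : F = fun x t ↦ ((t ^ p : ℝ) : ℂ) * (((1 - t) ^ q : ℝ) : ℂ) *
      log (1 + x * (((t ^ a * (1 - t) ^ b : ℝ) : ℂ) * c)) := by
    simp only [F, ofReal_mul, mul_assoc]
  rw [hF]
  have hw : AEStronglyMeasurable (fun t : ℝ ↦ ((t ^ p : ℝ) : ℂ) * (((1 - t) ^ q : ℝ) : ℂ))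
      (volume.restrict (Ioo 0 1)) := by fun_prop
  have hv : AEStronglyMeasurable (fun t : ℝ ↦ ((t ^ a * (1 - t) ^ b : ℝ) : ℂ) * c)
      (volume.restrict (Ioo 0 1)) := by fun_prop
  have hwv : IntegrableOn (fun t : ℝ ↦ ((t ^ p : ℝ) : ℂ) * (((1 - t) ^ q : ℝ) : ℂ) *
      (((t ^ a * (1 - t) ^ b : ℝ) : ℂ) * c)) (Ioo 0 1) := by
    refine IntegrableOn.congr_fun
      ((integrableOn_rpow_mul_one_sub_rpow hpa hqb).ofReal.mul_const c) (fun t ht ↦ ?_)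
      measurableSet_Ioo
    rw [RCLike.ofReal_eq_complex_ofReal, Real.rpow_add ht.1, Real.rpow_add (sub_pos.mpr ht.2)]
    push_cast
    ring
  exact ⟨fun x hx ↦ integrable_mul_log_one_add_mul hK hK0 hw hv hwv hvK (hSK hx),
    (differentiableOn_integral_mul_log_one_add_mul hK hK0 hw hv hwv hvK).mono hSK⟩
/-- Holomorphy of the integral representation: the function
`w(x) = 1 + (1/(4πin))·∫₀¹ t^{1/(2n)-1}(1-t)^{-1/(2n)-1}[e^{πi/(2n)}log(1+x t^{(n-1)/n}(1-t)^{1/n}e^{-πi/n})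
  - e^{-πi/(2n)}log(1+x t^{(n-1)/n}(1-t)^{1/n}e^{πi/n})]dt`
is complex differentiable on the complement `U` of the exceptional sets `Σ′₋ ∪ Σ′₊` of the
trinomial equation `zⁿ + x·z^{n-1} - 1 = 0`. -/
theorem integral_representation_holomorphic (n : ℕ) (hn : 2 ≤ n) :
    let U : Set ℂ := {x | ∀ t ∈ Set.Icc (0 : ℝ) 1,
      1 + x * ((t ^ (((n : ℝ) - 1) / (n : ℝ)) : ℝ) : ℂ) *
        (((1 - t) ^ ((1 : ℝ) / (n : ℝ)) : ℝ) : ℂ) *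
        Complex.exp (-((Real.pi : ℂ) * Complex.I / (n : ℂ))) ≠ 0 ∧
      1 + x * ((t ^ (((n : ℝ) - 1) / (n : ℝ)) : ℝ) : ℂ) *
        (((1 - t) ^ ((1 : ℝ) / (n : ℝ)) : ℝ) : ℂ) *
        Complex.exp ((Real.pi : ℂ) * Complex.I / (n : ℂ)) ≠ 0}
    DifferentiableOn ℂ (fun x : ℂ =>
      1 + (1 / (4 * (Real.pi : ℂ) * Complex.I * (n : ℂ))) *
        ∫ t in (0:ℝ)..1,
          ((t ^ (1 / (2 * (n : ℝ)) - 1) : ℝ) : ℂ) *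
            (((1 - t) ^ (-(1 / (2 * (n : ℝ))) - 1) : ℝ) : ℂ) *
            (Complex.exp ((Real.pi : ℂ) * Complex.I / (2 * (n : ℂ))) *
                Complex.log (1 + x * ((t ^ (((n : ℝ) - 1) / (n : ℝ)) : ℝ) : ℂ) *
                  (((1 - t) ^ ((1 : ℝ) / (n : ℝ)) : ℝ) : ℂ) *
                  Complex.exp (-((Real.pi : ℂ) * Complex.I / (n : ℂ)))) -
              Complex.exp (-((Real.pi : ℂ) * Complex.I / (2 * (n : ℂ)))) *
                Complex.log (1 + x * ((t ^ (((n : ℝ) - 1) / (n : ℝ)) : ℝ) : ℂ) *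
                  (((1 - t) ^ ((1 : ℝ) / (n : ℝ)) : ℝ) : ℂ) *
                  Complex.exp ((Real.pi : ℂ) * Complex.I / (n : ℂ))))) U := by
  intro U
  have hn' : (2 : ℝ) ≤ n := by exact_mod_cast hn
  have ha : 0 < ((n : ℝ) - 1) / n := div_pos (by linarith) (by linarith)
  have hb : 0 ≤ (1 : ℝ) / n := by positivity
  have hpa : -1 < 1 / (2 * (n : ℝ)) - 1 + ((n : ℝ) - 1) / n := by
    field_simp
    linarith
  have hqb : -1 < -(1 / (2 * (n : ℝ))) - 1 + 1 / n := by
    field_simp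
    linarith
  obtain ⟨hint₁, hdiff₁⟩ := integrableOn_and_differentiableOn_rpow_mul_log ha hb hpa hqb
    (exp (-(Real.pi * I / n)))
  obtain ⟨hint₂, hdiff₂⟩ := integrableOn_and_differentiableOn_rpow_mul_log ha hb hpa hqb
    (exp (Real.pi * I / n))
  have hU₁ : ∀ x ∈ U, _ := fun x hx t ht ↦ (hx t ht).1
  have hU₂ : ∀ x ∈ U, _ := fun x hx t ht ↦ (hx t ht).2
  refine DifferentiableOn.const_add 1 (DifferentiableOn.const_mul ?_ _)
  refine (((hdiff₁.mono hU₁).const_mul (exp (Real.pi * I / (2 * n)))).sub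
    ((hdiff₂.mono hU₂).const_mul (exp (-(Real.pi * I / (2 * n)))))).congr fun x hx ↦ ?_
  dsimp only [Pi.sub_apply]
  rw [intervalIntegral.integral_of_le zero_le_one, integral_Ioc_eq_integral_Ioo,
    ← integral_const_mul, ← integral_const_mul,
    ← integral_sub ((hint₁ x (hU₁ x hx)).const_mul _) ((hint₂ x (hU₂ x hx)).const_mul _)]
  congr 2 with t
  ring
end
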